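/- Let P = (K, V, q, θ, t ↦ [t], ·) be a polarity algebra. Then (u·v)·(v·u) = q(u·v)·u for all u, v ∈ V. -/

import Mathlib

open QuadraticMap

/-- A polarity algebra (De Medts–Segev–Weiss): a field `K` of characteristic 2, an
anisotropic quadratic space `(K, V, q)` whose polar form `f = ∂q` is not identically
zero, a Tits endomorphism `θ` of `K`, a `K`-linear embedding `t ↦ [t]` of the twisted
vector space `[K^θ]` (with scalar action `a • [t] = [a^θ t]`) into the radical of `f`,
and a multiplication on `V` satisfying the axioms (R1)–(R7). -/
structure PolarityAlgebra (K V : Type*) [Field K] [CharP K 2]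
    [AddCommGroup V] [Module K V] where
  q : QuadraticForm K V
  anisotropic : q.Anisotropic
  f_ne_zero : ∃ u v : V, polar q u v ≠ 0
  θ : K →+* K
  tits : ∀ t : K, θ (θ t) = t ^ 2
  br : K → V
  br_add : ∀ s t : K, br (s + t) = br s + br t
  br_smul : ∀ a t : K, a • br t = br (θ a * t)
  br_inj : Function.Injective br
  br_rad : ∀ (t : K) (v : V), polar q (br t) v = 0
  mul : V → V → V
  R1 : ∀ v : V, IsLinearMap K fun x => mul x v
  R2 : ∀ (t : K) (v : V), mul v (br t) = t • v
  R3 : ∀ (t : K) (u v : V), mul u (t • v) = θ t • mul u v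
  R4 : ∀ (t : K) (v : V), mul (br t) v = br (t * q v)
  R5 : ∀ u v : V, mul (mul u v) v = θ (q v) • u
  R6 : ∀ u v : V, mul v (mul u v) = q v • mul v u
  R7 : ∀ u v w : V, mul u (v + w) = mul u v + mul u w + br (polar q (mul v u) w)

variable {K V : Type*} [Field K] [CharP K 2] [AddCommGroup V] [Module K V]

/-! By (R6), `q(v) • (v·u) = v·(u·v)`. Feeding this into `(u·v)·_` and using (R3), (R6) and (R5)
gives `θ(q v) • (u·v)·(v·u) = θ(q v) • q(u·v) • u`, and `θ(q v) ≠ 0` for `v ≠ 0` by anisotropy. -/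

namespace PolarityAlgebra

variable (P : PolarityAlgebra K V)

theorem mul_zero (x : V) : P.mul x 0 = 0 := by
  simpa using P.R3 0 x 0

theorem zero_mul (x : V) : P.mul 0 x = 0 :=
  (P.R1 x).map_zero

theorem θ_q_ne_zero {v : V} (hv : v ≠ 0) : P.θ (P.q v) ≠ 0 :=
  (map_ne_zero P.θ).mpr (P.anisotropic.eq_zero_iff.not.mpr hv)

theorem θ_q_smul_mul_mul_rev (u v : V) :
    P.θ (P.q v) • P.mul (P.mul u v) (P.mul v u) = P.θ (P.q v) • P.q (P.mul u v) • u :=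
  calc P.θ (P.q v) • P.mul (P.mul u v) (P.mul v u)
      = P.mul (P.mul u v) (P.q v • P.mul v u) := (P.R3 _ _ _).symm
    _ = P.mul (P.mul u v) (P.mul v (P.mul u v)) := by rw [P.R6 u v]
    _ = P.q (P.mul u v) • P.mul (P.mul u v) v := P.R6 _ _
    _ = P.θ (P.q v) • P.q (P.mul u v) • u := by rw [P.R5, smul_comm]

end PolarityAlgebra

/-- In a polarity algebra, `(u·v)·(v·u) = q(u·v) • u`. -/
theorem polarityAlgebra_mul_mul_rev (P : PolarityAlgebra K V) (u v : V) :
    P.mul (P.mul u v) (P.mul v u) = P.q (P.mul u v) • u := by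
  by_cases hv : v = 0
  · subst hv
    simp [P.mul_zero, P.zero_mul]
  · exact smul_right_injective V (P.θ_q_ne_zero hv) (P.θ_q_smul_mul_mul_rev u v)
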